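/- arXiv:1610.00771 — 2 statements merged into one kernel-verified Lean document; each statement's English description precedes it below -/
import Mathlib

section
/- There is a universal constant C such that for every ε > 0 and every n ≥ 2 there exists an n-qubit protocol strategy whose acceptance probability is at least ω_opt − ε and whose Hilbert spaces H_A and H_B each have dimension at most 2^{C·(log n)/ε²}. -/
open scoped Matrix Kronecker ComplexConjugate

noncomputable section

abbrev Reg (n : ℕ) := (Fin n × Fin 2) → Fin 2

def cnorm {ι : Type*} [Fintype ι] (v : ι → ℂ) : ℝ :=
  Real.sqrt (∑ i, ‖v i‖ ^ 2)

def cinner {ι : Type*} [Fintype ι] (v w : ι → ℂ) : ℂ :=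
  ∑ i, (starRingEnd ℂ) (v i) * w i

def IsReflection {ι : Type*} [Fintype ι] [DecidableEq ι] (M : Matrix ι ι ℂ) : Prop :=
  M.IsHermitian ∧ M * M = 1

def sx : Matrix (Fin 2) (Fin 2) ℂ := !![0, 1; 1, 0]
def sy : Matrix (Fin 2) (Fin 2) ℂ := !![0, -Complex.I; Complex.I, 0]
def sz : Matrix (Fin 2) (Fin 2) ℂ := !![1, 0; 0, -1]

def onQubit {K : Type*} [Fintype K] [DecidableEq K] (k : K) (M : Matrix (Fin 2) (Fin 2) ℂ) :
    Matrix (K → Fin 2) (K → Fin 2) ℂ :=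
  fun f g => if ∀ k', k' ≠ k → f k' = g k' then M (f k) (g k) else 0

def eprAmp : Fin 2 → Fin 2 → ℂ := fun a b => if a = b then ((Real.sqrt 2 : ℝ) : ℂ)⁻¹ else 0

def eprLocal (n : ℕ) : Reg n → ℂ := fun f => ∏ j : Fin n, eprAmp (f (j, 0)) (f (j, 1))

def psiExt {dA dB : ℕ} (n : ℕ) (ψ : Fin dA × Fin dB → ℂ) :
    (Fin dA × Reg n) × (Fin dB × Reg n) → ℂ :=
  fun p => ψ (p.1.1, p.2.1) * eprLocal n p.1.2 * eprLocal n p.2.2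

def NQubitHyp (n : ℕ) (ε : ℝ) {dA dB : ℕ}
    (XA ZA : Fin n → Matrix (Fin dA) (Fin dA) ℂ)
    (XB ZB : Fin n → Matrix (Fin dB) (Fin dB) ℂ)
    (ψ : Fin dA × Fin dB → ℂ) : Prop :=
  cnorm ψ = 1 ∧
  (∀ j, IsReflection (XA j) ∧ IsReflection (ZA j) ∧ IsReflection (XB j) ∧ IsReflection (ZB j)) ∧
  (∀ j, XA j * ZA j + ZA j * XA j = 0) ∧
  (∀ j, XB j * ZB j + ZB j * XB j = 0) ∧
  (∀ P Q : Fin n → Matrix (Fin dA) (Fin dA) ℂ, (P = XA ∨ P = ZA) → (Q = XA ∨ Q = ZA) →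
    ∀ i j : Fin n, i ≠ j →
    cnorm (((P i * Q j - Q j * P i) ⊗ₖ (1 : Matrix (Fin dB) (Fin dB) ℂ)).mulVec ψ) ≤ ε) ∧
  (∀ P Q : Fin n → Matrix (Fin dB) (Fin dB) ℂ, (P = XB ∨ P = ZB) → (Q = XB ∨ Q = ZB) →
    ∀ i j : Fin n, i ≠ j →
    cnorm (((1 : Matrix (Fin dA) (Fin dA) ℂ) ⊗ₖ (P i * Q j - Q j * P i)).mulVec ψ) ≤ ε) ∧
  (∀ (P : Fin n → Matrix (Fin dA) (Fin dA) ℂ) (P' : Fin n → Matrix (Fin dB) (Fin dB) ℂ),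
    ((P = XA ∧ P' = XB) ∨ (P = ZA ∧ P' = ZB)) →
    ∀ j, cnorm ((P j ⊗ₖ P' j).mulVec ψ - ψ) ≤ ε)

def sgn : Bool → ℂ := fun x => if x then 1 else -1

def omegaOpt : ℝ := (1 + 2 * Real.cos (Real.pi / 8) ^ 2) / 3

/-- A two-outcome-pair projective measurement. -/
def ProjMeas {ι : Type*} [Fintype ι] [DecidableEq ι] (Pi : Bool → Bool → Matrix ι ι ℂ) : Prop :=
  (∀ x y, (Pi x y).IsHermitian ∧ Pi x y * Pi x y = Pi x y) ∧
  (∀ x y x' y', (x, y) ≠ (x', y') → Pi x y * Pi x' y' = 0) ∧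
  (∑ x : Bool, ∑ y : Bool, Pi x y) = 1

/-- `R i b j c` is the marginal observable `R^{jc}_{ib}` obtained from the joint measurements. -/
def RChar {ι : Type*} [Fintype ι] [DecidableEq ι] {n : ℕ}
    (Pi : Fin n → Fin n → Bool → Bool → Bool → Bool → Matrix ι ι ℂ)
    (R : Fin n → Bool → Fin n → Bool → Matrix ι ι ℂ) : Prop :=
  ∀ i j : Fin n, i < j → ∀ b c,
    R i b j c = (∑ x : Bool, ∑ y : Bool, sgn x • Pi i j b c x y) ∧
    R j c i b = (∑ x : Bool, ∑ y : Bool, sgn y • Pi i j b c x y)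

/-- The acceptance probability ω = (ω₁ + ω₂ + ω₃)/3 of a strategy for the n-qubit protocol. -/
def accProb {ιA ιB : Type*} [Fintype ιA] [DecidableEq ιA] [Fintype ιB] [DecidableEq ιB] (n : ℕ)
    (XA ZA : Fin n → Matrix ιA ιA ℂ)
    (XB ZB : Fin n → Matrix ιB ιB ℂ)
    (RA : Fin n → Bool → Fin n → Bool → Matrix ιA ιA ℂ)
    (RB : Fin n → Bool → Fin n → Bool → Matrix ιB ιB ℂ)
    (ψ : ιA × ιB → ℂ) : ℝ :=
  (1 / 3) * (
    (1 / (2 * (n : ℝ))) * ∑ i : Fin n, ∑ a : Bool,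
      (1 + (cinner ψ (((if a then XA i else ZA i) ⊗ₖ
          (if a then XB i else ZB i)).mulVec ψ)).re) / 2
    + (1 / (8 * (n : ℝ) * ((n : ℝ) - 1))) * ∑ i : Fin n, ∑ j : Fin n,
        (if i = j then 0 else ∑ a : Bool, ∑ b : Bool, ∑ c : Bool,
          (1 + (if a && b then -1 else 1) *
            (cinner ψ (((if a then XA i else ZA i) ⊗ₖ RB i b j c).mulVec ψ)).re) / 2)
    + (1 / (8 * (n : ℝ) * ((n : ℝ) - 1))) * ∑ i : Fin n, ∑ j : Fin n,
        (if i = j then 0 else ∑ a : Bool, ∑ b : Bool, ∑ c : Bool,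
          (1 + (if a && b then -1 else 1) *
            (cinner ψ ((RA i b j c ⊗ₖ (if a then XB i else ZB i)).mulVec ψ)).re) / 2))

/-- Validity of a strategy for the n-qubit protocol. -/
def StratValid {ιA ιB : Type*} [Fintype ιA] [DecidableEq ιA] [Fintype ιB] [DecidableEq ιB]
    (n : ℕ)
    (XA ZA : Fin n → Matrix ιA ιA ℂ)
    (XB ZB : Fin n → Matrix ιB ιB ℂ)
    (PiA : Fin n → Fin n → Bool → Bool → Bool → Bool → Matrix ιA ιA ℂ)
    (PiB : Fin n → Fin n → Bool → Bool → Bool → Bool → Matrix ιB ιB ℂ)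
    (ψ : ιA × ιB → ℂ) : Prop :=
  cnorm ψ = 1 ∧
  (∀ i, IsReflection (XA i) ∧ IsReflection (ZA i) ∧ IsReflection (XB i) ∧ IsReflection (ZB i)) ∧
  (∀ i j : Fin n, i < j → ∀ b c, ProjMeas (PiA i j b c)) ∧
  (∀ i j : Fin n, i < j → ∀ b c, ProjMeas (PiB i j b c))

/-!
The attack shares `k = ⌈1/ε⌉` EPR pairs and hashes the `n` protocol qubits onto them by
`h i = i mod k`. Qubit `i` is answered with the Pauli observables of pair `h i`. On a pair question
`(i, j)` with `h i ≠ h j` each party measures the CHSH observables `(Z ± X)/√2` on the two distinct,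
hence commuting, pairs, and wins with the CHSH-optimal probability `cos²(π/8)`; on a collision
`h i = h j` it answers `+1`. At most a `1/k` fraction of the pairs `i ≠ j` collide, so the value is at
least `ω_opt - 1/k ≥ ω_opt - ε`, in dimension `2^k ≤ 2^(3 log n / ε²)`. For `ε ≥ 1` the
one-dimensional strategy already suffices.
-/

lemma sgn_true : sgn true = 1 := rfl

lemma sgn_false : sgn false = -1 := rfl

section JointMeasurement

variable {R : Type*} [Ring R] [Algebra ℂ R] {A B : R}

def specProj (A : R) (x : Bool) : R := (2⁻¹ : ℂ) • (1 + sgn x • A)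

def jointMeas (A B : R) (x y : Bool) : R := specProj A x * specProj B y

lemma specProj_mul_specProj (hA : A * A = 1) (x y : Bool) :
    specProj A x * specProj A y = if x = y then specProj A x else 0 := by
  cases x <;> cases y <;>
    simp only [specProj, sgn_true, sgn_false, smul_mul_smul_comm, add_mul, mul_add, one_mul,
      mul_one, hA, reduceCtorEq, if_true, if_false] <;> module

lemma sum_specProj : ∑ x, specProj A x = 1 := by
  simp only [Fintype.sum_bool, specProj, sgn_true, sgn_false]; module

lemma sum_sgn_smul_specProj : ∑ x, sgn x • specProj A x = A := by
  simp only [Fintype.sum_bool, specProj, sgn_true, sgn_false]; module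

lemma Commute.specProj_specProj (h : Commute A B) (x y : Bool) :
    Commute (specProj A x) (specProj B y) := by
  have hA : Commute A (1 + sgn y • B) := (Commute.one_right A).add_right (h.smul_right _)
  exact (((Commute.one_left _).add_left (hA.smul_left _)).smul_left _).smul_right _

lemma IsSelfAdjoint.specProj [StarRing R] [StarModule ℂ R] (hA : IsSelfAdjoint A) (x : Bool) :
    IsSelfAdjoint (specProj A x) := by
  cases x <;> simp [_root_.specProj, sgn_true, sgn_false, IsSelfAdjoint, hA.star_eq]

lemma sum_sgn_fst_smul_jointMeas : ∑ x, ∑ y, sgn x • jointMeas A B x y = A := by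
  simp only [jointMeas, ← Finset.smul_sum, ← Finset.mul_sum, sum_specProj, mul_one,
    sum_sgn_smul_specProj]

lemma sum_sgn_snd_smul_jointMeas : ∑ x, ∑ y, sgn y • jointMeas A B x y = B := by
  simp only [jointMeas, ← mul_smul_comm, ← Finset.mul_sum, sum_sgn_smul_specProj,
    ← Finset.sum_mul, sum_specProj, one_mul]

variable {ι : Type*} [Fintype ι] [DecidableEq ι]

lemma isReflection_one : IsReflection (1 : Matrix ι ι ℂ) :=
  ⟨Matrix.isHermitian_one, mul_one 1⟩

lemma projMeas_jointMeas {A B : Matrix ι ι ℂ} (hA : IsReflection A) (hB : IsReflection B)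
    (hAB : Commute A B) : ProjMeas (jointMeas A B) := by
  have hmul (x y x' y' : Bool) : jointMeas A B x y * jointMeas A B x' y'
      = (specProj A x * specProj A x') * (specProj B y * specProj B y') :=
    (hAB.specProj_specProj x' y).symm.mul_mul_mul_comm _ _
  refine ⟨fun x y => ⟨?_, ?_⟩, fun x y x' y' hne => ?_, ?_⟩
  · exact Matrix.isHermitian_iff_isSelfAdjoint.2 <|
      (IsSelfAdjoint.commute_iff (hA.1.isSelfAdjoint.specProj x)
        (hB.1.isSelfAdjoint.specProj y)).1 (hAB.specProj_specProj x y)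
  · rw [hmul, specProj_mul_specProj hA.2, specProj_mul_specProj hB.2, if_pos rfl, if_pos rfl]
    rfl
  · rw [hmul, specProj_mul_specProj hA.2, specProj_mul_specProj hB.2]
    by_cases hx : x = x'
    · subst hx
      rw [if_pos rfl, if_neg fun hy => hne (by rw [hy]), mul_zero]
    · rw [if_neg hx, zero_mul]
  · simp only [jointMeas, ← Finset.sum_mul_sum, sum_specProj, one_mul]

end JointMeasurement

section Qubits

variable {K : Type*} [Fintype K] [DecidableEq K] (r : K) (M N : Matrix (Fin 2) (Fin 2) ℂ)

lemma onQubit_eq_submatrix :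
    onQubit r M = (M ⊗ₖ (1 : Matrix ({j // j ≠ r} → Fin 2) ({j // j ≠ r} → Fin 2) ℂ)).submatrix
      (Equiv.funSplitAt r (Fin 2)) (Equiv.funSplitAt r (Fin 2)) := by
  ext f g
  simp only [onQubit, Matrix.submatrix_apply, Matrix.kroneckerMap_apply, Equiv.funSplitAt_apply,
    Matrix.one_apply, funext_iff, Subtype.forall]
  split_ifs <;> simp_all

lemma onQubit_eq_submatrix_of_ne {s : K} (hsr : s ≠ r) :
    onQubit s N = ((1 : Matrix (Fin 2) (Fin 2) ℂ) ⊗ₖ onQubit (⟨s, hsr⟩ : {j // j ≠ r}) N).submatrix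
      (Equiv.funSplitAt r (Fin 2)) (Equiv.funSplitAt r (Fin 2)) := by
  ext f g
  have hcond : (∀ k, k ≠ s → f k = g k) ↔ f r = g r ∧ ∀ k, k ≠ r → k ≠ s → f k = g k :=
    ⟨fun h => ⟨h r hsr.symm, fun k _ hks => h k hks⟩,
      fun h k hks => if hkr : k = r then hkr ▸ h.1 else h.2 k hkr hks⟩
  simp only [onQubit, hcond, Matrix.submatrix_apply, Matrix.kroneckerMap_apply,
    Equiv.funSplitAt_apply, Matrix.one_apply, Subtype.forall, ne_eq, Subtype.mk.injEq]
  split_ifs <;> simp_all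

lemma onQubit_one : onQubit r (1 : Matrix (Fin 2) (Fin 2) ℂ) = (1 : Matrix (K → Fin 2) _ ℂ) := by
  rw [onQubit_eq_submatrix, Matrix.one_kronecker_one, Matrix.submatrix_one_equiv]

lemma onQubit_mul_onQubit : onQubit r M * onQubit r N = onQubit r (M * N) := by
  rw [onQubit_eq_submatrix, onQubit_eq_submatrix, onQubit_eq_submatrix,
    Matrix.submatrix_mul_equiv, ← Matrix.mul_kronecker_mul, mul_one]

lemma onQubit_commute {s : K} (hrs : r ≠ s) : Commute (onQubit r M) (onQubit s N) := by
  rw [Commute, SemiconjBy, onQubit_eq_submatrix, onQubit_eq_submatrix_of_ne r N hrs.symm,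
    Matrix.submatrix_mul_equiv, Matrix.submatrix_mul_equiv, ← Matrix.mul_kronecker_mul,
    ← Matrix.mul_kronecker_mul, mul_one, one_mul, one_mul, mul_one]

lemma onQubit_conjTranspose : (onQubit r M)ᴴ = onQubit r Mᴴ := by
  rw [onQubit_eq_submatrix, onQubit_eq_submatrix, Matrix.conjTranspose_submatrix,
    Matrix.conjTranspose_kronecker, Matrix.conjTranspose_one]

lemma onQubit_transpose : (onQubit r M)ᵀ = onQubit r Mᵀ := by
  rw [onQubit_eq_submatrix, onQubit_eq_submatrix, Matrix.transpose_submatrix,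
    ← Matrix.kroneckerMap_transpose, Matrix.transpose_one]

lemma trace_onQubit :
    (onQubit r M).trace = Fintype.card ({j // j ≠ r} → Fin 2) * M.trace := by
  rw [onQubit_eq_submatrix, mul_comm, ← Matrix.trace_one, ← Matrix.trace_kronecker]
  exact Equiv.sum_comp (Equiv.funSplitAt r (Fin 2)) (fun p => (M ⊗ₖ 1) p p)

lemma card_fun_fin_two : Fintype.card (K → Fin 2) = 2 * Fintype.card ({j // j ≠ r} → Fin 2) := by
  rw [Fintype.card_congr (Equiv.funSplitAt r (Fin 2)), Fintype.card_prod, Fintype.card_fin]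

lemma IsReflection.onQubit {M : Matrix (Fin 2) (Fin 2) ℂ} (hM : IsReflection M) :
    IsReflection (onQubit r M) :=
  ⟨by rw [Matrix.IsHermitian, onQubit_conjTranspose, hM.1.eq],
    by rw [onQubit_mul_onQubit, hM.2, onQubit_one]⟩

end Qubits

section MaximallyEntangled

variable (ι : Type*) [Fintype ι] [DecidableEq ι]

def maxEnt : ι × ι → ℂ := fun p => if p.1 = p.2 then ((Real.sqrt (Fintype.card ι) : ℝ) : ℂ)⁻¹ else 0

lemma cnorm_maxEnt [Nonempty ι] : cnorm (maxEnt ι) = 1 := by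
  simp [cnorm, maxEnt, Fintype.sum_prod_type, apply_ite]

variable {ι}

lemma cinner_maxEnt_kronecker (A B : Matrix ι ι ℂ) :
    cinner (maxEnt ι) ((A ⊗ₖ B) *ᵥ maxEnt ι) = (Fintype.card ι : ℂ)⁻¹ * (A * Bᵀ).trace := by
  have hc : ((Real.sqrt (Fintype.card ι) : ℝ) : ℂ)⁻¹ * ((Real.sqrt (Fintype.card ι) : ℝ) : ℂ)⁻¹
      = (Fintype.card ι : ℂ)⁻¹ := by
    rw [← mul_inv, ← Complex.ofReal_mul, Real.mul_self_sqrt (Nat.cast_nonneg _),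
      Complex.ofReal_natCast]
  simp only [cinner, maxEnt, Matrix.mulVec, dotProduct, Fintype.sum_prod_type,
    Matrix.kroneckerMap_apply, mul_ite, mul_zero, Finset.sum_ite_eq, Finset.mem_univ, if_true,
    apply_ite (starRingEnd ℂ), map_zero, Complex.conj_ofReal, map_inv₀, ite_mul, zero_mul,
    Matrix.trace, Matrix.diag, Matrix.mul_apply, Matrix.transpose_apply]
  rw [← hc, Finset.mul_sum]
  refine Finset.sum_congr rfl fun f _ => ?_
  rw [Finset.mul_sum, Finset.mul_sum]
  refine Finset.sum_congr rfl fun g _ => ?_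
  ring

lemma cinner_maxEnt_onQubit {K : Type*} [Fintype K] [DecidableEq K] (r : K)
    (M N : Matrix (Fin 2) (Fin 2) ℂ) :
    cinner (maxEnt (K → Fin 2)) ((onQubit r M ⊗ₖ onQubit r N) *ᵥ maxEnt (K → Fin 2))
      = 2⁻¹ * (M * Nᵀ).trace := by
  have hcard : (Fintype.card ({j // j ≠ r} → Fin 2) : ℂ) ≠ 0 :=
    Nat.cast_ne_zero.2 Fintype.card_ne_zero
  rw [cinner_maxEnt_kronecker, onQubit_transpose, onQubit_mul_onQubit, trace_onQubit,
    card_fun_fin_two r, Nat.cast_mul, Nat.cast_ofNat, mul_inv, mul_assoc,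
    inv_mul_cancel_left₀ hcard]

end MaximallyEntangled

section CHSH

def pauli (a : Bool) : Matrix (Fin 2) (Fin 2) ℂ := if a then sx else sz

def chshObs (b : Bool) : Matrix (Fin 2) (Fin 2) ℂ :=
  ((Real.sqrt 2 / 2 : ℝ) : ℂ) • (sz + (if b then -1 else 1) • sx)

lemma isReflection_pauli (a : Bool) : IsReflection (pauli a) := by
  refine ⟨?_, ?_⟩ <;> ext i j <;> fin_cases i <;> fin_cases j <;> cases a <;>
    simp [pauli, sx, sz, Matrix.mul_apply, Fin.sum_univ_two, Matrix.conjTranspose_apply]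

lemma isReflection_chshObs (b : Bool) : IsReflection (chshObs b) := by
  have h : ((Real.sqrt 2 : ℝ) : ℂ) / 2 * (((Real.sqrt 2 : ℝ) : ℂ) / 2) = 1 / 2 := by
    rw [div_mul_div_comm, ← Complex.ofReal_mul, Real.mul_self_sqrt zero_le_two]; norm_num
  refine ⟨?_, ?_⟩ <;> ext i j <;> fin_cases i <;> fin_cases j <;> cases b <;>
    simp [chshObs, sx, sz, Matrix.mul_apply, Fin.sum_univ_two, Matrix.conjTranspose_apply,
      Complex.conj_ofReal, h, ← two_mul]

lemma trace_mul_transpose_fin_two (A B : Matrix (Fin 2) (Fin 2) ℂ) :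
    (A * Bᵀ).trace = A 0 0 * B 0 0 + A 0 1 * B 0 1 + (A 1 0 * B 1 0 + A 1 1 * B 1 1) := by
  simp only [Matrix.trace_fin_two, Matrix.mul_apply, Fin.sum_univ_two, Matrix.transpose_apply]

lemma trace_pauli (a : Bool) : (pauli a).trace = 0 := by
  cases a <;> simp [pauli, sx, sz, Matrix.trace_fin_two]

lemma half_trace_pauli_mul_transpose (a : Bool) : 2⁻¹ * (pauli a * (pauli a)ᵀ).trace = 1 := by
  rw [trace_mul_transpose_fin_two]; cases a <;> norm_num [pauli, sx, sz]

lemma chsh_correlation (a b : Bool) :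
    (if a && b then -1 else 1) * (2⁻¹ * (pauli a * (chshObs b)ᵀ).trace).re = Real.sqrt 2 / 2 := by
  rw [trace_mul_transpose_fin_two]
  cases a <;> cases b <;> simp [pauli, chshObs, sx, sz, div_eq_inv_mul, ← two_mul]

lemma chsh_correlation' (a b : Bool) :
    (if a && b then -1 else 1) * (2⁻¹ * (chshObs b * (pauli a)ᵀ).trace).re = Real.sqrt 2 / 2 := by
  rw [← Matrix.trace_transpose, Matrix.transpose_mul, Matrix.transpose_transpose,
    chsh_correlation]

lemma omegaOpt_eq : omegaOpt = (2 + Real.sqrt 2 / 2) / 3 := by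
  rw [omegaOpt, Real.cos_sq, show 2 * (Real.pi / 8) = Real.pi / 4 by ring, Real.cos_pi_div_four]
  ring

lemma omegaOpt_le_one : omegaOpt ≤ 1 := by
  rw [omegaOpt]
  linarith [Real.cos_sq_le_one (Real.pi / 8)]

end CHSH

section Reindex

variable {ι τ : Type*} [Fintype ι] [Fintype τ]

lemma cnorm_comp_equiv (e : τ ≃ ι) (v : ι → ℂ) : cnorm (v ∘ e) = cnorm v := by
  simp only [cnorm, Function.comp_apply, Equiv.sum_comp e (fun i => ‖v i‖ ^ 2)]

lemma cinner_comp_equiv (e : τ ≃ ι) (v w : ι → ℂ) : cinner (v ∘ e) (w ∘ e) = cinner v w :=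
  Equiv.sum_comp e (fun i => (starRingEnd ℂ) (v i) * w i)

lemma cinner_reindex_kronecker {ιB τB : Type*} [Fintype ιB] [Fintype τB] (eA : ι ≃ τ)
    (eB : ιB ≃ τB) (A : Matrix ι ι ℂ) (B : Matrix ιB ιB ℂ) (ψ : ι × ιB → ℂ) :
    cinner (ψ ∘ Prod.map eA.symm eB.symm)
        ((Matrix.reindex eA eA A ⊗ₖ Matrix.reindex eB eB B) *ᵥ (ψ ∘ Prod.map eA.symm eB.symm))
      = cinner ψ ((A ⊗ₖ B) *ᵥ ψ) := by
  have he : (Prod.map eA.symm eB.symm : τ × τB → ι × ιB) = (eA.prodCongr eB).symm := rfl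
  rw [Matrix.kroneckerMap_reindex, he, Matrix.reindex_apply, Matrix.submatrix_mulVec_equiv,
    Equiv.symm_symm, Function.comp_assoc, Equiv.symm_comp_self, Function.comp_id,
    cinner_comp_equiv]

variable [DecidableEq ι] [DecidableEq τ] (e : ι ≃ τ)

lemma IsReflection.reindex {M : Matrix ι ι ℂ} (hM : IsReflection M) :
    IsReflection (Matrix.reindex e e M) :=
  ⟨hM.1.submatrix _, by rw [← Matrix.coe_reindexAlgEquiv ℂ, ← map_mul, hM.2, map_one]⟩

lemma ProjMeas.reindex {P : Bool → Bool → Matrix ι ι ℂ} (h : ProjMeas P) :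
    ProjMeas fun x y => Matrix.reindex e e (P x y) := by
  obtain ⟨hproj, horth, hsum⟩ := h
  simp only [← Matrix.coe_reindexAlgEquiv ℂ]
  refine ⟨fun x y => ⟨(hproj x y).1.submatrix _, by rw [← map_mul, (hproj x y).2]⟩,
    fun x y x' y' hne => by rw [← map_mul, horth x y x' y' hne, map_zero], ?_⟩
  simp only [← map_sum, hsum, map_one]

lemma RChar.reindex {n : ℕ} {P : Fin n → Fin n → Bool → Bool → Bool → Bool → Matrix ι ι ℂ}
    {R : Fin n → Bool → Fin n → Bool → Matrix ι ι ℂ} (h : RChar P R) :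
    RChar (fun i j b c x y => Matrix.reindex e e (P i j b c x y))
      (fun i b j c => Matrix.reindex e e (R i b j c)) := by
  intro i j hij b c
  simp only [← Matrix.coe_reindexAlgEquiv ℂ, ← map_smul, ← map_sum, (h i j hij b c).1,
    (h i j hij b c).2, and_self]

end Reindex

structure Strategy (n : ℕ) (ιA ιB : Type*) where
  XA : Fin n → Matrix ιA ιA ℂ
  ZA : Fin n → Matrix ιA ιA ℂ
  XB : Fin n → Matrix ιB ιB ℂ
  ZB : Fin n → Matrix ιB ιB ℂ
  PiA : Fin n → Fin n → Bool → Bool → Bool → Bool → Matrix ιA ιA ℂ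
  PiB : Fin n → Fin n → Bool → Bool → Bool → Bool → Matrix ιB ιB ℂ
  RA : Fin n → Bool → Fin n → Bool → Matrix ιA ιA ℂ
  RB : Fin n → Bool → Fin n → Bool → Matrix ιB ιB ℂ
  ψ : ιA × ιB → ℂ

namespace Strategy

variable {n : ℕ} {ιA ιB τA τB : Type*} [Fintype ιA] [DecidableEq ιA] [Fintype ιB] [DecidableEq ιB]
  [Fintype τA] [DecidableEq τA] [Fintype τB] [DecidableEq τB] (S : Strategy n ιA ιB)

def IsValid : Prop :=
  StratValid n S.XA S.ZA S.XB S.ZB S.PiA S.PiB S.ψ ∧ RChar S.PiA S.RA ∧ RChar S.PiB S.RB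

def value : ℝ := accProb n S.XA S.ZA S.XB S.ZB S.RA S.RB S.ψ

def reindex (eA : ιA ≃ τA) (eB : ιB ≃ τB) : Strategy n τA τB where
  XA i := Matrix.reindex eA eA (S.XA i)
  ZA i := Matrix.reindex eA eA (S.ZA i)
  XB i := Matrix.reindex eB eB (S.XB i)
  ZB i := Matrix.reindex eB eB (S.ZB i)
  PiA i j b c x y := Matrix.reindex eA eA (S.PiA i j b c x y)
  PiB i j b c x y := Matrix.reindex eB eB (S.PiB i j b c x y)
  RA i b j c := Matrix.reindex eA eA (S.RA i b j c)
  RB i b j c := Matrix.reindex eB eB (S.RB i b j c)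
  ψ := S.ψ ∘ Prod.map eA.symm eB.symm

variable {S}

lemma IsValid.reindex (hS : S.IsValid) (eA : ιA ≃ τA) (eB : ιB ≃ τB) :
    (S.reindex eA eB).IsValid := by
  obtain ⟨⟨hψ, hrefl, hA, hB⟩, hRA, hRB⟩ := hS
  refine ⟨⟨?_, fun i => ?_, fun i j hij b c => (hA i j hij b c).reindex eA,
    fun i j hij b c => (hB i j hij b c).reindex eB⟩, hRA.reindex eA, hRB.reindex eB⟩
  · exact (cnorm_comp_equiv ((eA.prodCongr eB).symm) S.ψ).trans hψ
  · obtain ⟨h₁, h₂, h₃, h₄⟩ := hrefl i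
    exact ⟨h₁.reindex eA, h₂.reindex eA, h₃.reindex eB, h₄.reindex eB⟩

lemma value_reindex (eA : ιA ≃ τA) (eB : ιB ≃ τB) : (S.reindex eA eB).value = S.value := by
  simp only [value, accProb, Strategy.reindex, ← apply_ite (Matrix.reindex _ _),
    cinner_reindex_kronecker]

end Strategy

section Collisions

variable {n : ℕ} {K : Type*} [DecidableEq K]

def collisions (h : Fin n → K) : ℕ :=
  ∑ i, (Finset.univ.filter fun j => i ≠ j ∧ h i = h j).card

lemma sum_sum_offDiag_const (y : ℝ) :
    ∑ i : Fin n, ∑ j : Fin n, (if i = j then 0 else y) = n * ((n - 1) * y) := by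
  rcases Nat.eq_zero_or_pos n with rfl | hn
  · simp
  simp [Finset.sum_ite, ← ne_eq, Finset.filter_ne, Nat.cast_sub hn]

lemma sum_sum_offDiag_ite_collide (h : Fin n → K) (x y : ℝ) :
    ∑ i, ∑ j, (if i = j then 0 else if h i = h j then x else y)
      = n * ((n - 1) * y) - collisions h * (y - x) := by
  have hterm (i j : Fin n) : (if i = j then 0 else if h i = h j then x else y)
      = (if i = j then 0 else y) - (if i ≠ j ∧ h i = h j then 1 else 0) * (y - x) := by
    by_cases hij : i = j <;> by_cases hh : h i = h j <;> simp [hij, hh]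
  simp only [hterm, Finset.sum_sub_distrib, sum_sum_offDiag_const, ← Finset.sum_mul,
    Finset.sum_boole, collisions, Nat.cast_sum]

variable {k : ℕ}

lemma card_filter_mod_eq_le (i : Fin n) :
    (Finset.univ.filter fun j : Fin n => (i : ℕ) % k = j % k).card ≤ (n - 1) / k + 1 := by
  calc _ ≤ (Finset.range ((n - 1) / k + 1)).card := by
        refine Finset.card_le_card_of_injOn (fun j : Fin n => (j : ℕ) / k) (fun j _ => ?_) ?_
        · simpa [Nat.lt_succ_iff] using Nat.div_le_div_right (Nat.le_sub_one_of_lt j.isLt)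
        · intro j₁ hj₁ j₂ hj₂ hdiv
          simp only [Finset.coe_filter, Finset.mem_univ, true_and, Set.mem_ofPred_eq] at hj₁ hj₂
          rw [Fin.ext_iff, ← Nat.div_add_mod j₁ k, ← Nat.div_add_mod j₂ k, ← hj₁, ← hj₂]
          simp only at hdiv
          rw [hdiv]
    _ = (n - 1) / k + 1 := Finset.card_range _

lemma mul_card_filter_ne_mod_eq_le (i : Fin n) :
    k * (Finset.univ.filter fun j : Fin n => i ≠ j ∧ (i : ℕ) % k = j % k).card ≤ n - 1 := by
  have hsub : (Finset.univ.filter fun j : Fin n => i ≠ j ∧ (i : ℕ) % k = j % k)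
      ⊆ (Finset.univ.filter fun j : Fin n => (i : ℕ) % k = j % k).erase i := by
    intro j
    simp only [Finset.mem_filter, Finset.mem_univ, true_and, Finset.mem_erase]
    exact fun ⟨hij, hmod⟩ => ⟨Ne.symm hij, hmod⟩
  have hcard := (Finset.card_le_card hsub).trans_eq (Finset.card_erase_of_mem (by simp))
  calc _ ≤ k * ((n - 1) / k) :=
        Nat.mul_le_mul_left k (hcard.trans (Nat.sub_le_iff_le_add.2 (card_filter_mod_eq_le i)))
    _ ≤ n - 1 := Nat.mul_div_le _ _

def modHash (hk : 0 < k) (i : Fin n) : Fin k := ⟨i % k, Nat.mod_lt _ hk⟩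

lemma mul_collisions_modHash_le (hk : 0 < k) :
    k * collisions (modHash (n := n) hk) ≤ n * (n - 1) := by
  have hrow (i : Fin n) : (Finset.univ.filter fun j => i ≠ j ∧ modHash hk i = modHash hk j)
      = Finset.univ.filter fun j : Fin n => i ≠ j ∧ (i : ℕ) % k = j % k := by
    simp [modHash, Fin.ext_iff]
  rw [collisions, Finset.mul_sum]
  calc _ ≤ ∑ _i : Fin n, (n - 1) := Finset.sum_le_sum fun i _ => by
        rw [hrow]; exact mul_card_filter_ne_mod_eq_le i
    _ = n * (n - 1) := by simp

end Collisions

section HashAttack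

variable {n : ℕ} {K : Type*} [Fintype K] [DecidableEq K] (h : Fin n → K)

def hashAttackObs (i : Fin n) (b : Bool) (j : Fin n) (_c : Bool) :
    Matrix (K → Fin 2) (K → Fin 2) ℂ :=
  onQubit (h i) (if h i = h j then 1 else chshObs b)

def hashAttack : Strategy n (K → Fin 2) (K → Fin 2) where
  XA i := onQubit (h i) (pauli true)
  ZA i := onQubit (h i) (pauli false)
  XB i := onQubit (h i) (pauli true)
  ZB i := onQubit (h i) (pauli false)
  PiA i j b c := jointMeas (hashAttackObs h i b j c) (hashAttackObs h j c i b)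
  PiB i j b c := jointMeas (hashAttackObs h i b j c) (hashAttackObs h j c i b)
  RA := hashAttackObs h
  RB := hashAttackObs h
  ψ := maxEnt (K → Fin 2)

lemma isReflection_hashAttackObs (i : Fin n) (b : Bool) (j : Fin n) (c : Bool) :
    IsReflection (hashAttackObs h i b j c) := by
  unfold hashAttackObs
  split_ifs
  · exact isReflection_one.onQubit _
  · exact (isReflection_chshObs b).onQubit _

lemma commute_hashAttackObs (i : Fin n) (b : Bool) (j : Fin n) (c : Bool) :
    Commute (hashAttackObs h i b j c) (hashAttackObs h j c i b) := by
  by_cases hij : h i = h j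
  · simp only [hashAttackObs, hij, if_true, onQubit_one, Commute.one_left]
  · exact onQubit_commute _ _ _ hij

lemma isValid_hashAttack : (hashAttack h).IsValid := by
  have hPi (i j : Fin n) (b c : Bool) :=
    projMeas_jointMeas (isReflection_hashAttackObs h i b j c)
      (isReflection_hashAttackObs h j c i b) (commute_hashAttackObs h i b j c)
  have hR : RChar (hashAttack h).PiA (hashAttackObs h) := fun i j _ b c =>
    ⟨sum_sgn_fst_smul_jointMeas.symm, sum_sgn_snd_smul_jointMeas.symm⟩
  have hP (a : Bool) (i : Fin n) := (isReflection_pauli a).onQubit (h i)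
  exact ⟨⟨cnorm_maxEnt _, fun i => ⟨hP _ i, hP _ i, hP _ i, hP _ i⟩,
    fun i j _ b c => hPi i j b c, fun i j _ b c => hPi i j b c⟩, hR, hR⟩

lemma ite_onQubit_pauli (r : K) (a : Bool) :
    (if a then onQubit r (pauli true) else onQubit r (pauli false)) = onQubit r (pauli a) := by
  cases a <;> rfl

lemma sum_score_hashAttack_left (i j : Fin n) :
    ∑ a : Bool, ∑ b : Bool, ∑ c : Bool, (1 + (if a && b then -1 else 1) *
      (cinner (maxEnt (K → Fin 2))
        ((onQubit (h i) (pauli a) ⊗ₖ hashAttackObs h i b j c) *ᵥ maxEnt (K → Fin 2))).re) / 2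
      = if h i = h j then 4 else 4 + 4 * (Real.sqrt 2 / 2) := by
  by_cases hij : h i = h j
  · simp only [hashAttackObs, hij, if_true, cinner_maxEnt_onQubit, Matrix.transpose_one, mul_one,
      trace_pauli, mul_zero, Complex.zero_re, add_zero, Finset.sum_const, Finset.card_univ,
      Fintype.card_bool, nsmul_eq_mul]
    norm_num
  · simp only [hashAttackObs, hij, if_false, cinner_maxEnt_onQubit, chsh_correlation,
      Finset.sum_const, Finset.card_univ, Fintype.card_bool, nsmul_eq_mul]
    ring

lemma sum_score_hashAttack_right (i j : Fin n) :
    ∑ a : Bool, ∑ b : Bool, ∑ c : Bool, (1 + (if a && b then -1 else 1) *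
      (cinner (maxEnt (K → Fin 2))
        ((hashAttackObs h i b j c ⊗ₖ onQubit (h i) (pauli a)) *ᵥ maxEnt (K → Fin 2))).re) / 2
      = if h i = h j then 4 else 4 + 4 * (Real.sqrt 2 / 2) := by
  by_cases hij : h i = h j
  · simp only [hashAttackObs, hij, if_true, cinner_maxEnt_onQubit, one_mul,
      Matrix.trace_transpose, trace_pauli, mul_zero, Complex.zero_re, add_zero, Finset.sum_const,
      Finset.card_univ, Fintype.card_bool, nsmul_eq_mul]
    norm_num
  · simp only [hashAttackObs, hij, if_false, cinner_maxEnt_onQubit, chsh_correlation',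
      Finset.sum_const, Finset.card_univ, Fintype.card_bool, nsmul_eq_mul]
    ring

lemma value_hashAttack (hn : 2 ≤ n) :
    (hashAttack h).value
      = (2 + Real.sqrt 2 / 2) / 3 - Real.sqrt 2 / 2 * collisions h / (3 * (n * (n - 1))) := by
  have hn₀ : (n : ℝ) ≠ 0 := by positivity
  have hn₁ : (n : ℝ) - 1 ≠ 0 := by
    have : (2 : ℝ) ≤ n := by exact_mod_cast hn
    linarith
  simp only [Strategy.value, accProb, hashAttack, ite_onQubit_pauli, cinner_maxEnt_onQubit,
    half_trace_pauli_mul_transpose, sum_score_hashAttack_left, sum_score_hashAttack_right,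
    sum_sum_offDiag_ite_collide, Complex.one_re, Finset.sum_const, Finset.card_univ,
    Fintype.card_bool, Fintype.card_fin, nsmul_eq_mul]
  field_simp
  ring

end HashAttack

lemma omegaOpt_sub_inv_le_value_hashAttack {n k : ℕ} (hk : 0 < k) (hn : 2 ≤ n) :
    omegaOpt - (k : ℝ)⁻¹ ≤ (hashAttack (modHash (n := n) hk)).value := by
  set c : ℝ := (collisions (modHash (n := n) hk) : ℝ)
  have hpairs : (0 : ℝ) < n * (n - 1) := by
    have : (2 : ℝ) ≤ n := by exact_mod_cast hn
    nlinarith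
  have hc : c ≤ (k : ℝ)⁻¹ * (n * (n - 1)) := by
    have := mul_collisions_modHash_le (n := n) hk
    rw [← Nat.cast_le (α := ℝ), Nat.cast_mul, Nat.cast_mul, Nat.cast_sub (by omega)] at this
    rw [le_inv_mul_iff₀ (by exact_mod_cast hk)]
    simpa using this
  have hsqrt : Real.sqrt 2 / 2 ≤ 3 := by
    nlinarith [Real.sq_sqrt (show (0 : ℝ) ≤ 2 by norm_num), Real.sqrt_nonneg 2]
  rw [value_hashAttack _ hn, omegaOpt_eq, sub_le_sub_iff_left, div_le_iff₀ (by positivity)]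
  calc Real.sqrt 2 / 2 * c ≤ 3 * c := by gcongr
    _ ≤ (k : ℝ)⁻¹ * (3 * (n * (n - 1))) := by linarith

lemma two_pow_ceil_inv_le {ε : ℝ} (hε : 0 < ε) (hε1 : ε < 1) {n : ℕ} (hn : 2 ≤ n) :
    ((2 ^ ⌈ε⁻¹⌉₊ : ℕ) : ℝ) ≤ 2 ^ (3 * Real.log n / ε ^ 2) := by
  rw [Nat.cast_pow, Nat.cast_ofNat, ← Real.rpow_natCast]
  refine Real.rpow_le_rpow_of_exponent_le one_le_two ?_
  have hceil : (⌈ε⁻¹⌉₊ : ℝ) < ε⁻¹ + 1 := Nat.ceil_lt_add_one (inv_nonneg.2 hε.le)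
  have hlog : 2 ≤ 3 * Real.log n := by
    have h2 : Real.log 2 ≤ Real.log n := Real.log_le_log two_pos (by exact_mod_cast hn)
    linarith [Real.log_two_gt_d9]
  have hsq : (ε⁻¹ + 1) * ε ^ 2 = ε + ε ^ 2 := by field_simp
  rw [le_div_iff₀ (by positivity)]
  nlinarith [mul_le_mul_of_nonneg_right hceil.le (sq_nonneg ε)]

def trivialStrategy (n : ℕ) : Strategy n (Fin 1) (Fin 1) where
  XA _ := 1
  ZA _ := 1
  XB _ := 1
  ZB _ := 1
  PiA _ _ _ _ := jointMeas 1 1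
  PiB _ _ _ _ := jointMeas 1 1
  RA _ _ _ _ := 1
  RB _ _ _ _ := 1
  ψ := maxEnt (Fin 1)

lemma isValid_trivialStrategy (n : ℕ) : (trivialStrategy n).IsValid := by
  have hPi := projMeas_jointMeas (isReflection_one (ι := Fin 1)) isReflection_one
    (Commute.one_left 1)
  have hR : RChar (trivialStrategy n).PiA (trivialStrategy n).RA := fun i j _ b c =>
    ⟨sum_sgn_fst_smul_jointMeas.symm, sum_sgn_snd_smul_jointMeas.symm⟩
  exact ⟨⟨cnorm_maxEnt _, fun _ => ⟨isReflection_one, isReflection_one, isReflection_one,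
    isReflection_one⟩, fun _ _ _ _ _ => hPi, fun _ _ _ _ _ => hPi⟩, hR, hR⟩

lemma value_trivialStrategy {n : ℕ} (hn : 2 ≤ n) : (trivialStrategy n).value = 5 / 6 := by
  have hone : cinner (maxEnt (Fin 1))
      (((1 : Matrix (Fin 1) (Fin 1) ℂ) ⊗ₖ 1) *ᵥ maxEnt (Fin 1)) = 1 := by
    rw [cinner_maxEnt_kronecker]; simp
  have hscore : ∑ a : Bool, ∑ b : Bool, ∑ _c : Bool,
      (1 + (if a && b then -1 else 1) * 1 : ℝ) / 2 = 6 := by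
    norm_num [Fintype.sum_bool]
  have hn₀ : (n : ℝ) ≠ 0 := by positivity
  have hn₁ : (n : ℝ) - 1 ≠ 0 := by
    have : (2 : ℝ) ≤ n := by exact_mod_cast hn
    linarith
  simp only [Strategy.value, accProb, trivialStrategy, ite_self, hone, Complex.one_re, hscore]
  simp only [sum_sum_offDiag_const, Finset.sum_const, Finset.card_univ, Fintype.card_bool,
    Fintype.card_fin, nsmul_eq_mul]
  field_simp
  ring

/-- a low-dimensional attack on the n-qubit protocol. -/
theorem stmt_11 :
    ∃ C : ℝ, 0 < C ∧
    ∀ (ε : ℝ), 0 < ε → ∀ (n : ℕ), 2 ≤ n →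
    ∃ (dA dB : ℕ)
      (XA ZA : Fin n → Matrix (Fin dA) (Fin dA) ℂ)
      (XB ZB : Fin n → Matrix (Fin dB) (Fin dB) ℂ)
      (PiA : Fin n → Fin n → Bool → Bool → Bool → Bool → Matrix (Fin dA) (Fin dA) ℂ)
      (PiB : Fin n → Fin n → Bool → Bool → Bool → Bool → Matrix (Fin dB) (Fin dB) ℂ)
      (RA : Fin n → Bool → Fin n → Bool → Matrix (Fin dA) (Fin dA) ℂ)
      (RB : Fin n → Bool → Fin n → Bool → Matrix (Fin dB) (Fin dB) ℂ)
      (ψ : Fin dA × Fin dB → ℂ),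
      StratValid n XA ZA XB ZB PiA PiB ψ ∧
      RChar PiA RA ∧ RChar PiB RB ∧
      (dA : ℝ) ≤ (2 : ℝ) ^ (C * Real.log n / ε ^ 2) ∧
      (dB : ℝ) ≤ (2 : ℝ) ^ (C * Real.log n / ε ^ 2) ∧
      accProb n XA ZA XB ZB RA RB ψ ≥ omegaOpt - ε := by
  refine ⟨3, three_pos, fun ε hε n hn => ?_⟩
  rcases lt_or_ge ε 1 with hε1 | hε1
  · have hk : 0 < ⌈ε⁻¹⌉₊ := Nat.ceil_pos.2 (inv_pos.2 hε)
    let S := (hashAttack (modHash (n := n) hk)).reindex finFunctionFinEquiv finFunctionFinEquiv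
    have hS : S.IsValid := (isValid_hashAttack _).reindex _ _
    have hdim := two_pow_ceil_inv_le hε hε1 hn
    refine ⟨_, _, S.XA, S.ZA, S.XB, S.ZB, S.PiA, S.PiB, S.RA, S.RB, S.ψ, hS.1, hS.2.1, hS.2.2,
      hdim, hdim, ?_⟩
    show omegaOpt - ε ≤ S.value
    rw [Strategy.value_reindex]
    linarith [omegaOpt_sub_inv_le_value_hashAttack hk hn,
      inv_le_of_inv_le₀ hε (Nat.le_ceil ε⁻¹)]
  · let S := trivialStrategy n
    have hS : S.IsValid := isValid_trivialStrategy n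
    have hdim : ((1 : ℕ) : ℝ) ≤ 2 ^ (3 * Real.log n / ε ^ 2) := by
      have := Real.log_nonneg (by exact_mod_cast (by omega : 1 ≤ n) : (1 : ℝ) ≤ n)
      exact Nat.cast_one.trans_le (Real.one_le_rpow one_le_two (by positivity))
    refine ⟨1, 1, S.XA, S.ZA, S.XB, S.ZB, S.PiA, S.PiB, S.RA, S.RB, S.ψ, hS.1, hS.2.1, hS.2.2,
      hdim, hdim, ?_⟩
    show omegaOpt - ε ≤ S.value
    linarith [value_trivialStrategy hn, omegaOpt_le_one]
end
end

section
/- Let H_A, H_B be finite-dimensional complex Hilbert spaces, let ψ ∈ H_A ⊗ H_B be a unit vector, let A, B be unitary operators on H_A, and let R, S be unitary operators on H_B with RS = SR. If ‖(A ⊗ R)ψ − ψ‖ ≤ ε and ‖(B ⊗ S)ψ − ψ‖ ≤ ε, then ‖((AB − BA) ⊗ I)ψ‖ ≤ 4ε. -/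
open scoped Matrix Kronecker ComplexConjugate

noncomputable section

section Aux

variable {ι : Type*} [Fintype ι]

lemma cnorm_nonneg (v : ι → ℂ) : 0 ≤ cnorm v := Real.sqrt_nonneg _

lemma cnorm_sq_eq (v : ι → ℂ) :
    ((cnorm v : ℝ) : ℂ) ^ 2 = dotProduct (star v) v := by
  have : dotProduct (star v) v = ((∑ i, ‖v i‖ ^ 2 : ℝ) : ℂ) := by
    simp only [dotProduct, Pi.star_apply, Complex.ofReal_sum]
    refine Finset.sum_congr rfl fun i _ => ?_
    rw [show star (v i) = (starRingEnd ℂ) (v i) from rfl,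
      ← Complex.normSq_eq_conj_mul_self, Complex.normSq_eq_norm_sq]
  rw [this, cnorm]
  norm_cast
  rw [Real.sq_sqrt (Finset.sum_nonneg fun i _ => sq_nonneg _)]

lemma cnorm_neg (v : ι → ℂ) : cnorm (-v) = cnorm v := by
  unfold cnorm
  congr 1
  exact Finset.sum_congr rfl fun i _ => by simp

lemma cnorm_triangle (v w : ι → ℂ) : cnorm (v + w) ≤ cnorm v + cnorm w := by
  classical
  have h := norm_add_le ((WithLp.equiv 2 (ι → ℂ)).symm v) ((WithLp.equiv 2 (ι → ℂ)).symm w)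
  simpa [EuclideanSpace.norm_eq, cnorm] using h

lemma cnorm_mulVec_unitary [DecidableEq ι] (M : Matrix ι ι ℂ) (h : Mᴴ * M = 1) (v : ι → ℂ) :
    cnorm (M.mulVec v) = cnorm v := by
  have key : dotProduct (star (M.mulVec v)) (M.mulVec v)
      = dotProduct (star v) v := by
    rw [Matrix.star_mulVec, ← Matrix.dotProduct_mulVec, Matrix.mulVec_mulVec, h,
      Matrix.one_mulVec]
  have h2 : ((cnorm (M.mulVec v) : ℝ) : ℂ) ^ 2 = ((cnorm v : ℝ) : ℂ) ^ 2 := by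
    rw [cnorm_sq_eq, cnorm_sq_eq, key]
  have h3 : (cnorm (M.mulVec v)) ^ 2 = (cnorm v) ^ 2 := by
    exact_mod_cast h2
  rw [← Real.sqrt_sq (cnorm_nonneg (M.mulVec v)), ← Real.sqrt_sq (cnorm_nonneg v), h3]

lemma sub_kronecker' {m n : Type*} (A B : Matrix m m ℂ) (C : Matrix n n ℂ) :
    (A - B) ⊗ₖ C = A ⊗ₖ C - B ⊗ₖ C := by
  ext i j
  simp [Matrix.kronecker_apply, sub_mul]

lemma conjTranspose_kronecker' {m n : Type*} (A : Matrix m m ℂ) (C : Matrix n n ℂ) :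
    (A ⊗ₖ C)ᴴ = Aᴴ ⊗ₖ Cᴴ := by
  ext i j
  simp [Matrix.conjTranspose_apply, Matrix.kronecker_apply]

end Aux

/-- approximate commutation transferred through the other system. -/
theorem stmt_12 (dA dB : ℕ) (ψ : Fin dA × Fin dB → ℂ) (hψ : cnorm ψ = 1)
    (A B : Matrix (Fin dA) (Fin dA) ℂ) (R S : Matrix (Fin dB) (Fin dB) ℂ)
    (hA : A * Aᴴ = 1 ∧ Aᴴ * A = 1) (hB : B * Bᴴ = 1 ∧ Bᴴ * B = 1)
    (hR : R * Rᴴ = 1 ∧ Rᴴ * R = 1) (hS : S * Sᴴ = 1 ∧ Sᴴ * S = 1)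
    (hRS : R * S = S * R) (ε : ℝ)
    (h1 : cnorm ((A ⊗ₖ R).mulVec ψ - ψ) ≤ ε)
    (h2 : cnorm ((B ⊗ₖ S).mulVec ψ - ψ) ≤ ε) :
    cnorm (((A * B - B * A) ⊗ₖ (1 : Matrix (Fin dB) (Fin dB) ℂ)).mulVec ψ) ≤ 4 * ε := by
  classical
  set U := A ⊗ₖ R with hU
  set V := B ⊗ₖ S with hV
  have hUu : Uᴴ * U = 1 := by
    rw [hU, conjTranspose_kronecker', ← Matrix.mul_kronecker_mul, hA.2, hR.2,
      Matrix.one_kronecker_one]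
  have hVu : Vᴴ * V = 1 := by
    rw [hV, conjTranspose_kronecker', ← Matrix.mul_kronecker_mul, hB.2, hS.2,
      Matrix.one_kronecker_one]
  have hRSu : (R * S)ᴴ * (R * S) = 1 := by
    rw [Matrix.conjTranspose_mul, Matrix.mul_assoc, ← Matrix.mul_assoc Rᴴ, hR.2,
      Matrix.one_mul, hS.2]
  -- ‖UVψ − ψ‖ ≤ 2ε
  have key : ∀ (W₁ W₂ : Matrix ((Fin dA) × (Fin dB)) ((Fin dA) × (Fin dB)) ℂ),
      W₁ᴴ * W₁ = 1 → cnorm (W₁.mulVec ψ - ψ) ≤ ε → cnorm (W₂.mulVec ψ - ψ) ≤ ε →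
      cnorm ((W₁ * W₂).mulVec ψ - ψ) ≤ 2 * ε := by
    intro W₁ W₂ h₁u e₁ e₂
    have decomp : (W₁ * W₂).mulVec ψ - ψ
        = (W₁.mulVec (W₂.mulVec ψ - ψ)) + (W₁.mulVec ψ - ψ) := by
      rw [Matrix.mulVec_sub, ← Matrix.mulVec_mulVec]
      abel
    calc cnorm ((W₁ * W₂).mulVec ψ - ψ)
        ≤ cnorm (W₁.mulVec (W₂.mulVec ψ - ψ)) + cnorm (W₁.mulVec ψ - ψ) := by
          rw [decomp]; exact cnorm_triangle _ _
      _ = cnorm (W₂.mulVec ψ - ψ) + cnorm (W₁.mulVec ψ - ψ) := by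
          rw [cnorm_mulVec_unitary _ h₁u]
      _ ≤ ε + ε := add_le_add e₂ e₁
      _ = 2 * ε := by ring
  have hUV : cnorm ((U * V).mulVec ψ - ψ) ≤ 2 * ε := key U V hUu h1 h2
  have hVU : cnorm ((V * U).mulVec ψ - ψ) ≤ 2 * ε := key V U hVu h2 h1
  have hcomb : cnorm (((A * B - B * A) ⊗ₖ (R * S)).mulVec ψ) ≤ 4 * ε := by
    have e1 : (A * B - B * A) ⊗ₖ (R * S) = U * V - V * U := by
      rw [sub_kronecker', hU, hV, ← Matrix.mul_kronecker_mul, ← Matrix.mul_kronecker_mul, hRS]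
    have e2 : ((A * B - B * A) ⊗ₖ (R * S)).mulVec ψ
        = ((U * V).mulVec ψ - ψ) - ((V * U).mulVec ψ - ψ) := by
      rw [e1, Matrix.sub_mulVec]; abel
    calc cnorm (((A * B - B * A) ⊗ₖ (R * S)).mulVec ψ)
        ≤ cnorm ((U * V).mulVec ψ - ψ) + cnorm (-((V * U).mulVec ψ - ψ)) := by
          rw [e2, sub_eq_add_neg]; exact cnorm_triangle _ _
      _ = cnorm ((U * V).mulVec ψ - ψ) + cnorm ((V * U).mulVec ψ - ψ) := by
          rw [cnorm_neg]
      _ ≤ 2 * ε + 2 * ε := add_le_add hUV hVU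
      _ = 4 * ε := by ring
  have hW : ((1 : Matrix (Fin dA) (Fin dA) ℂ) ⊗ₖ (R * S))ᴴ
      * ((1 : Matrix (Fin dA) (Fin dA) ℂ) ⊗ₖ (R * S)) = 1 := by
    rw [conjTranspose_kronecker', ← Matrix.mul_kronecker_mul, hRSu]
    simp [Matrix.one_kronecker_one]
  have hfin : ((A * B - B * A) ⊗ₖ (R * S)).mulVec ψ
      = ((1 : Matrix (Fin dA) (Fin dA) ℂ) ⊗ₖ (R * S)).mulVec
        (((A * B - B * A) ⊗ₖ (1 : Matrix (Fin dB) (Fin dB) ℂ)).mulVec ψ) := by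
    rw [Matrix.mulVec_mulVec, ← Matrix.mul_kronecker_mul, Matrix.one_mul, Matrix.mul_one]
  rw [← cnorm_mulVec_unitary _ hW, ← hfin]
  exact hcomb


end
end
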